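/- arXiv:2601.19256 — 3 statements merged into one kernel-verified Lean document; each statement's English description precedes it below -/
import Mathlib

section
/- Let Q : [a,b] → ℝ be four times continuously differentiable and let p be the unique cubic polynomial satisfying the Hermite conditions p(a)=Q(a), p(b)=Q(b), p'(a)=Q'(a), p'(b)=Q'(b). Then for every x ∈ [a,b], |Q(x) − p(x)| ≤ ((b−a)^4 / 384) · sup_{ξ ∈ [a,b]} |Q''''(ξ)|. -/
private lemma hermite_rolle_aux {a b u v : ℝ} (hu : a ≤ u) (hv : v ≤ b) (huv : u < v)
    {f f' : ℝ → ℝ} (hc : ContinuousOn f (Set.Icc a b))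
    (hd : ∀ t ∈ Set.Ioo a b, HasDerivAt f (f' t) t)
    (h0 : f u = 0) (h1 : f v = 0) :
    ∃ c ∈ Set.Ioo u v, f' c = 0 :=
  exists_hasDerivAt_eq_zero huv (hc.mono (Set.Icc_subset_Icc hu hv)) (by rw [h0, h1])
    (fun t ht => hd t (Set.Ioo_subset_Ioo hu hv ht))

/-- Cubic Hermite interpolation error bound: if `Q` is four times
continuously differentiable on `[a,b]` and `p` is a cubic polynomial satisfying the
Hermite conditions `p(a) = Q(a)`, `p(b) = Q(b)`, `p'(a) = Q'(a)`, `p'(b) = Q'(b)`,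
then for every `x ∈ [a,b]`,
`|Q(x) − p(x)| ≤ ((b−a)^4 / 384) · sup_{ξ ∈ [a,b]} |Q''''(ξ)|`. -/
theorem cubic_hermite_interpolation_error (a b : ℝ) (hab : a < b) (Q : ℝ → ℝ)
    (hQ : ContDiffOn ℝ 4 Q (Set.Icc a b))
    (p : Polynomial ℝ) (hdeg : p.natDegree ≤ 3)
    (hpa : p.eval a = Q a) (hpb : p.eval b = Q b)
    (hpa' : (Polynomial.derivative p).eval a = derivWithin Q (Set.Icc a b) a)
    (hpb' : (Polynomial.derivative p).eval b = derivWithin Q (Set.Icc a b) b) :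
    ∀ x ∈ Set.Icc a b,
      |Q x - p.eval x| ≤ (b - a)^4 / 384 *
        sSup ((fun ξ => |iteratedDerivWithin 4 Q (Set.Icc a b) ξ|) '' Set.Icc a b) := by
  have huniq : UniqueDiffOn ℝ (Set.Icc a b) := uniqueDiffOn_Icc hab
  have hdk : ∀ k : ℕ, k < 4 → ∀ t ∈ Set.Ioo a b,
      HasDerivAt (iteratedDerivWithin k Q (Set.Icc a b))
        (iteratedDerivWithin (k+1) Q (Set.Icc a b) t) t := by
    intro k hk t ht
    have hts : t ∈ Set.Icc a b := Set.mem_Icc_of_Ioo ht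
    have hdiff := (hQ.differentiableOn_iteratedDerivWithin (by exact_mod_cast hk) huniq) t hts
    have h2 := hdiff.hasDerivWithinAt.hasDerivAt (Icc_mem_nhds ht.1 ht.2)
    rwa [← iteratedDerivWithin_succ] at h2
  have hcont : ∀ k : ℕ, k ≤ 4 →
      ContinuousOn (iteratedDerivWithin k Q (Set.Icc a b)) (Set.Icc a b) :=
    fun k hk => hQ.continuousOn_iteratedDerivWithin (by exact_mod_cast hk) huniq
  set M := sSup ((fun ξ => |iteratedDerivWithin 4 Q (Set.Icc a b) ξ|) '' Set.Icc a b) with hM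
  have hbdd : BddAbove ((fun ξ => |iteratedDerivWithin 4 Q (Set.Icc a b) ξ|) '' Set.Icc a b) :=
    isCompact_Icc.bddAbove_image (hcont 4 le_rfl).abs
  have hMle : ∀ t ∈ Set.Icc a b, |iteratedDerivWithin 4 Q (Set.Icc a b) t| ≤ M :=
    fun t ht => le_csSup hbdd (Set.mem_image_of_mem _ ht)
  have hM0 : 0 ≤ M := le_trans (abs_nonneg _) (hMle a (Set.left_mem_Icc.2 hab.le))
  have hRHS0 : 0 ≤ (b - a)^4 / 384 * M := mul_nonneg (by positivity) hM0
  intro x hx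
  rcases eq_or_lt_of_le hx.1 with rfl | hax
  · simpa [← hpa] using hRHS0
  rcases eq_or_lt_of_le hx.2 with rfl | hxb
  · simpa [← hpb] using hRHS0
  -- main case: a < x < b
  have hxa0 : x - a ≠ 0 := sub_ne_zero.2 hax.ne'
  have hxb0 : x - b ≠ 0 := sub_ne_zero.2 hxb.ne
  have hw0x : (x - a)^2 * (x - b)^2 ≠ 0 :=
    mul_ne_zero (pow_ne_zero _ hxa0) (pow_ne_zero _ hxb0)
  set K : ℝ := (Q x - p.eval x) / ((x - a)^2 * (x - b)^2) with hK
  -- elementary derivative facts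
  have hlin : ∀ c t : ℝ, HasDerivAt (fun t => t - c) 1 t :=
    fun c t => by simpa using (hasDerivAt_id t).sub_const c
  have hsq : ∀ c t : ℝ, HasDerivAt (fun t => (t - c)^2) (2*(t-c)) t := by
    intro c t
    have := (hlin c t).pow 2
    refine this.congr_deriv ?_
    ring
  -- weight functions
  set w0 : ℝ → ℝ := fun t => (t - a)^2 * (t - b)^2 with hw0def
  set w1 : ℝ → ℝ := fun t => 2*(t - a)*(t - b)^2 + 2*(t - a)^2*(t - b) with hw1def
  set w2 : ℝ → ℝ := fun t => 2*(t - b)^2 + 8*(t - a)*(t - b) + 2*(t - a)^2 with hw2def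
  set w3 : ℝ → ℝ := fun t => 12*(t - b) + 12*(t - a) with hw3def
  have hw0 : ∀ t, HasDerivAt w0 (w1 t) t := by
    intro t
    have := (hsq a t).mul (hsq b t)
    refine this.congr_deriv ?_
    simp only [hw1def]; ring
  have hw1 : ∀ t, HasDerivAt w1 (w2 t) t := by
    intro t
    have h1 : HasDerivAt (fun t => 2*(t-a)) 2 t := by
      simpa using (hlin a t).const_mul 2
    have h2 : HasDerivAt (fun t => 2*(t-a)^2) (2*(2*(t-a))) t := (hsq a t).const_mul 2
    have := (h1.mul (hsq b t)).add (h2.mul (hlin b t))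
    refine this.congr_deriv ?_
    simp only [hw2def]; ring
  have hw2 : ∀ t, HasDerivAt w2 (w3 t) t := by
    intro t
    have h1 : HasDerivAt (fun t => 2*(t-b)^2) (2*(2*(t-b))) t := (hsq b t).const_mul 2
    have h2 : HasDerivAt (fun t => 2*(t-a)^2) (2*(2*(t-a))) t := (hsq a t).const_mul 2
    have ha : HasDerivAt (fun t => 8*(t-a)) 8 t := by
      simpa using (hlin a t).const_mul 8
    have h3 := ha.mul (hlin b t)
    have := (h1.add h3).add h2
    refine this.congr_deriv ?_
    simp only [hw3def]; ring
  have hw3 : ∀ t : ℝ, HasDerivAt w3 24 t := by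
    intro t
    have h1 : HasDerivAt (fun t => 12*(t-b)) 12 t := by
      simpa using (hlin b t).const_mul 12
    have h2 : HasDerivAt (fun t => 12*(t-a)) 12 t := by
      simpa using (hlin a t).const_mul 12
    have := h1.add h2
    refine this.congr_deriv ?_
    norm_num
  have hwc0 : Continuous w0 := by rw [hw0def]; fun_prop
  have hwc1 : Continuous w1 := by rw [hw1def]; fun_prop
  have hwc2 : Continuous w2 := by rw [hw2def]; fun_prop
  have hwc3 : Continuous w3 := by rw [hw3def]; fun_prop
  -- auxiliary functions
  set g0 : ℝ → ℝ := fun t => Q t - p.eval t - K * w0 t with hg0def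
  set g1 : ℝ → ℝ :=
    fun t => iteratedDerivWithin 1 Q (Set.Icc a b) t - (Polynomial.derivative p).eval t
      - K * w1 t with hg1def
  set g2 : ℝ → ℝ :=
    fun t => iteratedDerivWithin 2 Q (Set.Icc a b) t - (Polynomial.derivative^[2] p).eval t
      - K * w2 t with hg2def
  set g3 : ℝ → ℝ :=
    fun t => iteratedDerivWithin 3 Q (Set.Icc a b) t - (Polynomial.derivative^[3] p).eval t
      - K * w3 t with hg3def
  have hp4 : Polynomial.derivative^[4] p = 0 :=
    Polynomial.iterate_derivative_eq_zero (lt_of_le_of_lt hdeg (by norm_num))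
  -- derivatives of the g's
  have hg0d : ∀ t ∈ Set.Ioo a b, HasDerivAt g0 (g1 t) t := by
    intro t ht
    have h1 : HasDerivAt Q (iteratedDerivWithin 1 Q (Set.Icc a b) t) t := by
      have := hdk 0 (by norm_num) t ht
      norm_num at this
      simpa [iteratedDerivWithin_zero] using this
    exact (h1.sub (p.hasDerivAt t)).sub ((hw0 t).const_mul K)
  have hg1d : ∀ t ∈ Set.Ioo a b, HasDerivAt g1 (g2 t) t := by
    intro t ht
    have hD := hdk 1 (by norm_num) t ht
    norm_num [-iteratedDerivWithin_one] at hD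
    have h2 : HasDerivAt (fun t => (Polynomial.derivative p).eval t)
        ((Polynomial.derivative^[2] p).eval t) t := by
      have := (Polynomial.derivative p).hasDerivAt t
      have e2 : Polynomial.derivative^[2] p = Polynomial.derivative (Polynomial.derivative p) := by
        simp [Function.iterate_succ_apply']
      rw [e2]; exact this
    exact (hD.sub h2).sub ((hw1 t).const_mul K)
  have hg2d : ∀ t ∈ Set.Ioo a b, HasDerivAt g2 (g3 t) t := by
    intro t ht
    have hD := hdk 2 (by norm_num) t ht
    norm_num at hD
    have h2 : HasDerivAt (fun t => (Polynomial.derivative^[2] p).eval t)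
        ((Polynomial.derivative^[3] p).eval t) t := by
      have := (Polynomial.derivative^[2] p).hasDerivAt t
      have e3 : Polynomial.derivative^[3] p
          = Polynomial.derivative (Polynomial.derivative^[2] p) :=
        Function.iterate_succ_apply' _ _ _
      rw [e3]; exact this
    exact (hD.sub h2).sub ((hw2 t).const_mul K)
  have hg3d : ∀ t ∈ Set.Ioo a b,
      HasDerivAt g3 (iteratedDerivWithin 4 Q (Set.Icc a b) t - K * 24) t := by
    intro t ht
    have hD := hdk 3 (by norm_num) t ht
    norm_num at hD
    have h2 : HasDerivAt (fun t => (Polynomial.derivative^[3] p).eval t) 0 t := by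
      have := (Polynomial.derivative^[3] p).hasDerivAt t
      have e4 : Polynomial.derivative (Polynomial.derivative^[3] p) = 0 := by
        have h5 := Function.iterate_succ_apply' (⇑Polynomial.derivative) 3 p
        rw [← h5]; exact hp4
      rw [e4] at this
      simpa using this
    have := (hD.sub h2).sub ((hw3 t).const_mul K)
    refine this.congr_deriv ?_
    ring
  -- continuity of the g's
  have hg0c : ContinuousOn g0 (Set.Icc a b) :=
    (hQ.continuousOn.sub p.continuous_aeval.continuousOn).sub
      (continuous_const.mul hwc0).continuousOn
  have hg1c : ContinuousOn g1 (Set.Icc a b) :=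
    ((hcont 1 (by norm_num)).sub (Polynomial.derivative p).continuous_aeval.continuousOn).sub
      (continuous_const.mul hwc1).continuousOn
  have hg2c : ContinuousOn g2 (Set.Icc a b) :=
    ((hcont 2 (by norm_num)).sub
      (Polynomial.derivative^[2] p).continuous_aeval.continuousOn).sub
      (continuous_const.mul hwc2).continuousOn
  have hg3c : ContinuousOn g3 (Set.Icc a b) :=
    ((hcont 3 (by norm_num)).sub
      (Polynomial.derivative^[3] p).continuous_aeval.continuousOn).sub
      (continuous_const.mul hwc3).continuousOn
  -- zeros
  have hg0a : g0 a = 0 := by simp [hg0def, hw0def, ← hpa]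
  have hg0b : g0 b = 0 := by simp [hg0def, hw0def, ← hpb]
  have hg0x : g0 x = 0 := by
    simp only [hg0def, hw0def, hK]
    field_simp
    ring
  have hg1a : g1 a = 0 := by
    have h1 : iteratedDerivWithin 1 Q (Set.Icc a b) a = derivWithin Q (Set.Icc a b) a :=
      congrFun iteratedDerivWithin_one a
    simp [hg1def, hw1def, h1, ← hpa']
  have hg1b : g1 b = 0 := by
    have h1 : iteratedDerivWithin 1 Q (Set.Icc a b) b = derivWithin Q (Set.Icc a b) b :=
      congrFun iteratedDerivWithin_one b
    simp [hg1def, hw1def, h1, ← hpb']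
  clear_value M K w0 w1 w2 w3 g0 g1 g2 g3
  -- Rolle cascade
  obtain ⟨c1, hc1, hg1c1⟩ := hermite_rolle_aux le_rfl hxb.le hax hg0c hg0d hg0a hg0x
  obtain ⟨c2, hc2, hg1c2⟩ := hermite_rolle_aux hax.le le_rfl hxb hg0c hg0d hg0x hg0b
  have hc1m : c1 ∈ Set.Ioo a b := ⟨hc1.1, hc1.2.trans hxb⟩
  have hc2m : c2 ∈ Set.Ioo a b := ⟨hax.trans hc2.1, hc2.2⟩
  have hc12 : c1 < c2 := hc1.2.trans hc2.1
  obtain ⟨d1, hd1, hg2d1⟩ := hermite_rolle_aux le_rfl hc1m.2.le hc1m.1 hg1c hg1d hg1a hg1c1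
  obtain ⟨d2, hd2, hg2d2⟩ := hermite_rolle_aux hc1m.1.le hc2m.2.le hc12 hg1c hg1d hg1c1 hg1c2
  obtain ⟨d3, hd3, hg2d3⟩ := hermite_rolle_aux hc2m.1.le le_rfl hc2m.2 hg1c hg1d hg1c2 hg1b
  have hd1m : d1 ∈ Set.Ioo a b := ⟨hd1.1, hd1.2.trans hc1m.2⟩
  have hd2m : d2 ∈ Set.Ioo a b := ⟨hc1m.1.trans hd2.1, hd2.2.trans hc2m.2⟩
  have hd3m : d3 ∈ Set.Ioo a b := ⟨hc2m.1.trans hd3.1, hd3.2⟩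
  have hd12 : d1 < d2 := hd1.2.trans hd2.1
  have hd23 : d2 < d3 := hd2.2.trans hd3.1
  obtain ⟨e1, he1, hg3e1⟩ := hermite_rolle_aux hd1m.1.le hd2m.2.le hd12 hg2c hg2d hg2d1 hg2d2
  obtain ⟨e2, he2, hg3e2⟩ := hermite_rolle_aux hd2m.1.le hd3m.2.le hd23 hg2c hg2d hg2d2 hg2d3
  have he1m : e1 ∈ Set.Ioo a b := ⟨hd1m.1.trans he1.1, he1.2.trans hd2m.2⟩
  have he2m : e2 ∈ Set.Ioo a b := ⟨hd2m.1.trans he2.1, he2.2.trans hd3m.2⟩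
  have he12 : e1 < e2 := he1.2.trans he2.1
  obtain ⟨ξ, hξ, hg4ξ⟩ := hermite_rolle_aux he1m.1.le he2m.2.le he12 hg3c hg3d hg3e1 hg3e2
  have hξm : ξ ∈ Set.Icc a b := ⟨(he1m.1.trans hξ.1).le, (hξ.2.trans he2m.2).le⟩
  -- extract the value of K and conclude
  have hKval : K = iteratedDerivWithin 4 Q (Set.Icc a b) ξ / 24 := by
    linarith only [hg4ξ]
  have hval : Q x - p.eval x
      = iteratedDerivWithin 4 Q (Set.Icc a b) ξ / 24 * ((x - a)^2 * (x - b)^2) := by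
    have h1 : Q x - p.eval x = K * ((x - a)^2 * (x - b)^2) := by
      rw [hK]; field_simp
    rw [h1, hKval]
  have hb1 : (x - a)^2 * (x - b)^2 ≤ (b - a)^4 / 16 := by
    nlinarith only [sq_nonneg (2*x - a - b), mul_nonneg (sub_nonneg.2 hax.le)
      (sub_nonneg.2 hxb.le), sq_nonneg ((x - a) * (x - b)), sq_nonneg (x - a),
      sq_nonneg (x - b), hax.le, hxb.le]
  have hb2 : |iteratedDerivWithin 4 Q (Set.Icc a b) ξ| ≤ M := hMle ξ hξm
  have habs : |Q x - p.eval x|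
      = |iteratedDerivWithin 4 Q (Set.Icc a b) ξ| / 24 * ((x - a)^2 * (x - b)^2) := by
    rw [hval, abs_mul, abs_div, abs_of_nonneg (by positivity : (0:ℝ) ≤ (x - a)^2 * (x - b)^2)]
    norm_num
  have h3 : |iteratedDerivWithin 4 Q (Set.Icc a b) ξ| * ((x - a)^2 * (x - b)^2)
      ≤ M * ((b - a)^4 / 16) :=
    mul_le_mul hb2 hb1 (by positivity) hM0
  rw [habs]
  linarith only [h3]
end

section
/- Fix an interval [α, β] of length h = β − α > 0. Let p be the cubic Hermite interpolant on [α,β] determined by endpoint values Q_0, Q_1 and endpoint derivatives D_0, D_1, and let p̂ be the cubic Hermite interpolant determined by perturbed data Q̂_0, Q̂_1, D̂_0, D̂_1. Then for every τ ∈ [α,β], |p̂(τ) − p(τ)| ≤ |Q̂_0 − Q_0| + |Q̂_1 − Q_1| + (4h/27)(|D̂_0 − D_0| + |D̂_1 − D_1|). -/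
/-!
The difference of two Hermite interpolants is the Hermite interpolant of the differences of
the data, so it suffices to bound one interpolant by its data. In the local coordinate
`ξ ∈ [0, 1]` the value basis functions are `h00 = (1 - ξ)²(1 + 2ξ)` and `h01 = ξ²(3 - 2ξ)`,
both in `[0, 1]`, while the slope basis functions `h10 = ξ(1 - ξ)²` and `h11 = -ξ²(1 - ξ)`
have maximal modulus `4/27`, attained at `ξ = 1/3` and `ξ = 2/3`:
`4/27 - h10 = (1 - 3ξ)²(4 - 3ξ)/27` and `4/27 + h11 = (2 - 3ξ)²(1 + 3ξ)/27`.
-/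

/-- The cubic Hermite interpolant on the interval `[a, b]` determined by endpoint
values `Q0`, `Q1` and endpoint derivatives `D0`, `D1`, written in the local
coordinate `ξ = (τ - a) / (b - a)`. -/
noncomputable def hermiteOn (a b Q0 D0 Q1 D1 : ℝ) (τ : ℝ) : ℝ :=
  let h : ℝ := b - a
  let ξ : ℝ := (τ - a) / h
  (2*ξ^3 - 3*ξ^2 + 1) * Q0 + (ξ^3 - 2*ξ^2 + ξ) * h * D0
    + (-2*ξ^3 + 3*ξ^2) * Q1 + (ξ^3 - ξ^2) * h * D1

open Set

section HermiteBasis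

variable {ξ : ℝ}

lemma abs_hermite_h00_le_one (hξ : ξ ∈ Icc 0 1) : |2*ξ^3 - 3*ξ^2 + 1| ≤ 1 := by
  obtain ⟨h0, h1⟩ := hξ
  rw [abs_le]
  constructor <;> nlinarith [mul_nonneg (sq_nonneg (1 - ξ)) (by linarith : (0:ℝ) ≤ 1 + 2*ξ),
    mul_nonneg (sq_nonneg ξ) (by linarith : (0:ℝ) ≤ 3 - 2*ξ)]

lemma abs_hermite_h01_le_one (hξ : ξ ∈ Icc 0 1) : |-2*ξ^3 + 3*ξ^2| ≤ 1 := by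
  obtain ⟨h0, h1⟩ := hξ
  rw [abs_le]
  constructor <;> nlinarith [mul_nonneg (sq_nonneg (1 - ξ)) (by linarith : (0:ℝ) ≤ 1 + 2*ξ),
    mul_nonneg (sq_nonneg ξ) (by linarith : (0:ℝ) ≤ 3 - 2*ξ)]

lemma abs_hermite_h10_le (hξ : ξ ∈ Icc 0 1) : |ξ^3 - 2*ξ^2 + ξ| ≤ 4/27 := by
  obtain ⟨h0, h1⟩ := hξ
  rw [abs_le]
  constructor <;> nlinarith [mul_nonneg h0 (sq_nonneg (1 - ξ)),
    mul_nonneg (sq_nonneg (1 - 3*ξ)) (by linarith : (0:ℝ) ≤ 4 - 3*ξ)]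

lemma abs_hermite_h11_le (hξ : ξ ∈ Icc 0 1) : |ξ^3 - ξ^2| ≤ 4/27 := by
  obtain ⟨h0, h1⟩ := hξ
  rw [abs_le]
  constructor <;> nlinarith [mul_nonneg (sq_nonneg ξ) (by linarith : (0:ℝ) ≤ 1 - ξ),
    mul_nonneg (sq_nonneg (2 - 3*ξ)) (by linarith : (0:ℝ) ≤ 1 + 3*ξ)]

end HermiteBasis

lemma div_sub_mem_Icc_zero_one {a b τ : ℝ} (hτ : τ ∈ Icc a b) :
    (τ - a) / (b - a) ∈ Icc 0 1 :=
  ⟨div_nonneg (sub_nonneg.2 hτ.1) (sub_nonneg.2 (hτ.1.trans hτ.2)),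
    div_le_one_of_le₀ (sub_le_sub_right hτ.2 a) (sub_nonneg.2 (hτ.1.trans hτ.2))⟩

lemma hermiteOn_sub (a b Q0 D0 Q1 D1 Q0' D0' Q1' D1' τ : ℝ) :
    hermiteOn a b Q0' D0' Q1' D1' τ - hermiteOn a b Q0 D0 Q1 D1 τ
      = hermiteOn a b (Q0' - Q0) (D0' - D0) (Q1' - Q1) (D1' - D1) τ := by
  simp only [hermiteOn]
  ring

lemma abs_hermiteOn_le {a b τ : ℝ} (hτ : τ ∈ Icc a b) (Q0 D0 Q1 D1 : ℝ) :
    |hermiteOn a b Q0 D0 Q1 D1 τ| ≤ |Q0| + |Q1| + 4*(b - a)/27 * (|D0| + |D1|) := by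
  have hξ := div_sub_mem_Icc_zero_one hτ
  have hh : 0 ≤ b - a := sub_nonneg.2 (hτ.1.trans hτ.2)
  set ξ := (τ - a) / (b - a)
  set h := b - a
  calc |hermiteOn a b Q0 D0 Q1 D1 τ|
      ≤ |(2*ξ^3 - 3*ξ^2 + 1) * Q0| + |(ξ^3 - 2*ξ^2 + ξ) * h * D0|
          + |(-2*ξ^3 + 3*ξ^2) * Q1| + |(ξ^3 - ξ^2) * h * D1| :=
        (abs_add_le _ _).trans (add_le_add_left
          ((abs_add_le _ _).trans (add_le_add_left (abs_add_le _ _) _)) _)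
    _ = |2*ξ^3 - 3*ξ^2 + 1| * |Q0| + |ξ^3 - 2*ξ^2 + ξ| * h * |D0|
          + |-2*ξ^3 + 3*ξ^2| * |Q1| + |ξ^3 - ξ^2| * h * |D1| := by
        simp only [abs_mul, abs_of_nonneg hh]
    _ ≤ 1 * |Q0| + 4/27 * h * |D0| + 1 * |Q1| + 4/27 * h * |D1| := by
        gcongr
        exacts [abs_hermite_h00_le_one hξ, abs_hermite_h10_le hξ, abs_hermite_h01_le_one hξ,
          abs_hermite_h11_le hξ]
    _ = |Q0| + |Q1| + 4*h/27 * (|D0| + |D1|) := by ring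

theorem hermite_perturbation_bound_general (a b : ℝ)
    (Q0 Q1 D0 D1 Qh0 Qh1 Dh0 Dh1 : ℝ) :
    ∀ τ ∈ Set.Icc a b,
      |hermiteOn a b Qh0 Dh0 Qh1 Dh1 τ - hermiteOn a b Q0 D0 Q1 D1 τ|
        ≤ |Qh0 - Q0| + |Qh1 - Q1| + 4*(b - a)/27 * (|Dh0 - D0| + |Dh1 - D1|) := by
  intro τ hτ
  rw [hermiteOn_sub]
  exact abs_hermiteOn_le hτ _ _ _ _

/-- Stability of cubic Hermite interpolation on one interval:
if `p` is the cubic Hermite interpolant on `[a,b]` (of length `h = b - a > 0`) built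
from data `Q0, Q1, D0, D1` and `p̂` the one built from perturbed data
`Q̂0, Q̂1, D̂0, D̂1`, then for every `τ ∈ [a,b]`,
`|p̂(τ) − p(τ)| ≤ |Q̂0 − Q0| + |Q̂1 − Q1| + (4h/27)(|D̂0 − D0| + |D̂1 − D1|)`. -/
theorem hermite_perturbation_bound (a b : ℝ) (hab : 0 < b - a)
    (Q0 Q1 D0 D1 Qh0 Qh1 Dh0 Dh1 : ℝ) :
    ∀ τ ∈ Set.Icc a b,
      |hermiteOn a b Qh0 Dh0 Qh1 Dh1 τ - hermiteOn a b Q0 D0 Q1 D1 τ|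
        ≤ |Qh0 - Q0| + |Qh1 - Q1| + 4*(b - a)/27 * (|Dh0 - D0| + |Dh1 - D1|) :=
  hermite_perturbation_bound_general a b Q0 Q1 D0 D1 Qh0 Qh1 Dh0 Dh1
end

section
/- Let Y be an integrable real random variable with cumulative distribution function F, let τ ∈ (0,1), and let q* be a τ-quantile of Y, i.e. P(Y < q*) ≤ τ ≤ F(q*). Then for every q ∈ ℝ, E[ρ_τ(Y − q*)] ≤ E[ρ_τ(Y − q)]; that is, the τ-quantile minimizes the expected pinball loss. -/
open MeasureTheory

/-- The pinball (check) loss at level `τ`: `ρ_τ(u) = (τ − 1{u ≤ 0})·u`. -/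
noncomputable def pinball (τ u : ℝ) : ℝ := (τ - if u ≤ 0 then 1 else 0) * u

lemma pinball_eq (τ u : ℝ) : pinball τ u = τ * u + max (-u) 0 := by
  unfold pinball
  rcases le_or_gt u 0 with h | h
  · rw [if_pos h, max_eq_left (by linarith)]; ring
  · rw [if_neg (not_le.mpr h), max_eq_right (by linarith)]; ring

lemma quantile_minimizes_pinball_loss_aux
    {Ω : Type*} [MeasurableSpace Ω] (μ : Measure Ω) [IsProbabilityMeasure μ]
    (Y : Ω → ℝ) (hm : Measurable Y) (hY : Integrable Y μ)
    (τ : ℝ) (hτ : τ ∈ Set.Ioo (0:ℝ) 1) (qstar : ℝ)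
    (h1 : (μ {ω | Y ω < qstar}).toReal ≤ τ)
    (h2 : τ ≤ (μ {ω | Y ω ≤ qstar}).toReal) (q : ℝ) :
    0 ≤ ∫ ω, (pinball τ (Y ω - q) - pinball τ (Y ω - qstar)) ∂μ := by
  have hint1 : Integrable (fun ω => max (q - Y ω) 0) μ :=
    ((integrable_const q).sub hY).pos_part
  have hint2 : Integrable (fun ω => max (qstar - Y ω) 0) μ :=
    ((integrable_const qstar).sub hY).pos_part
  have key : ∀ ω, pinball τ (Y ω - q) - pinball τ (Y ω - qstar)
      = τ * (qstar - q) + (max (q - Y ω) 0 - max (qstar - Y ω) 0) := by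
    intro ω
    rw [pinball_eq, pinball_eq, neg_sub, neg_sub]
    ring
  have hrw : ∫ ω, (pinball τ (Y ω - q) - pinball τ (Y ω - qstar)) ∂μ
      = τ * (qstar - q) + (∫ ω, (max (q - Y ω) 0 - max (qstar - Y ω) 0) ∂μ) := by
    have hsub : Integrable (fun ω => max (q - Y ω) 0 - max (qstar - Y ω) 0) μ :=
      hint1.sub hint2
    rw [show (fun ω => pinball τ (Y ω - q) - pinball τ (Y ω - qstar))
        = fun ω => τ * (qstar - q) + (max (q - Y ω) 0 - max (qstar - Y ω) 0) from
        funext key]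
    rw [integral_add (integrable_const _) hsub, integral_const]
    simp
  rw [hrw]
  rcases le_total q qstar with hle | hle
  · -- use s = {Y < qstar}
    set s : Set Ω := {ω | Y ω < qstar} with hs_def
    have hs : MeasurableSet s := measurableSet_lt hm measurable_const
    have hbound : ∀ ω, s.indicator (fun _ => q - qstar) ω
        ≤ max (q - Y ω) 0 - max (qstar - Y ω) 0 := by
      intro ω
      by_cases hω : Y ω < qstar
      · rw [Set.indicator_of_mem (show ω ∈ s from hω)]
        have h3 : qstar - Y ω ≤ max (qstar - Y ω) 0 := le_max_left _ _
        have h4 : max (qstar - Y ω) 0 = qstar - Y ω := max_eq_left (by linarith)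
        have h5 : q - Y ω ≤ max (q - Y ω) 0 := le_max_left _ _
        linarith
      · rw [Set.indicator_of_notMem (show ω ∉ s from hω)]
        push_neg at hω
        have h4 : max (qstar - Y ω) 0 = 0 := max_eq_right (by linarith)
        have h5 : max (q - Y ω) 0 = 0 := max_eq_right (by linarith)
        linarith
    have hmono : ∫ ω, s.indicator (fun _ => q - qstar) ω ∂μ
        ≤ ∫ ω, (max (q - Y ω) 0 - max (qstar - Y ω) 0) ∂μ :=
      integral_mono ((integrable_const _).indicator hs) (hint1.sub hint2) hbound
    rw [integral_indicator_const _ hs, smul_eq_mul] at hmono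
    have hμτ : τ * (q - qstar) ≤ (μ s).toReal * (q - qstar) :=
      mul_le_mul_of_nonpos_right h1 (by linarith)
    nlinarith [show (μ s).toReal * (q - qstar) ≤ _ from hmono]
  · -- use s = {Y ≤ qstar}
    set s : Set Ω := {ω | Y ω ≤ qstar} with hs_def
    have hs : MeasurableSet s := measurableSet_le hm measurable_const
    have hbound : ∀ ω, s.indicator (fun _ => q - qstar) ω
        ≤ max (q - Y ω) 0 - max (qstar - Y ω) 0 := by
      intro ω
      by_cases hω : Y ω ≤ qstar
      · rw [Set.indicator_of_mem (show ω ∈ s from hω)]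
        have h4 : max (qstar - Y ω) 0 = qstar - Y ω := max_eq_left (by linarith)
        have h5 : max (q - Y ω) 0 = q - Y ω := max_eq_left (by linarith)
        linarith
      · rw [Set.indicator_of_notMem (show ω ∉ s from hω)]
        push_neg at hω
        have h4 : max (qstar - Y ω) 0 = 0 := max_eq_right (by linarith)
        have h5 : (0:ℝ) ≤ max (q - Y ω) 0 := le_max_right _ _
        linarith
    have hmono : ∫ ω, s.indicator (fun _ => q - qstar) ω ∂μ
        ≤ ∫ ω, (max (q - Y ω) 0 - max (qstar - Y ω) 0) ∂μ :=
      integral_mono ((integrable_const _).indicator hs) (hint1.sub hint2) hbound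
    rw [integral_indicator_const _ hs, smul_eq_mul] at hmono
    have hμτ : τ * (q - qstar) ≤ (μ s).toReal * (q - qstar) :=
      mul_le_mul_of_nonneg_right h2 (by linarith)
    nlinarith [show (μ s).toReal * (q - qstar) ≤ _ from hmono]

/-- The `τ`-quantile minimizes the expected pinball loss: if `Y` is an
integrable real random variable, `τ ∈ (0,1)` and `q*` is a `τ`-quantile of `Y`
(i.e. `P(Y < q*) ≤ τ ≤ P(Y ≤ q*)`), then for every `q`,
`E[ρ_τ(Y−q) − ρ_τ(Y−q*)] ≥ 0` (the centered form of
`E[ρ_τ(Y − q*)] ≤ E[ρ_τ(Y − q)]`, always well defined for integrable `Y`). -/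
theorem quantile_minimizes_pinball_loss
    {Ω : Type*} [MeasurableSpace Ω] (μ : Measure Ω) [IsProbabilityMeasure μ]
    (Y : Ω → ℝ) (hY : Integrable Y μ)
    (τ : ℝ) (hτ : τ ∈ Set.Ioo (0:ℝ) 1) (qstar : ℝ)
    (h1 : (μ {ω | Y ω < qstar}).toReal ≤ τ)
    (h2 : τ ≤ (μ {ω | Y ω ≤ qstar}).toReal) :
    ∀ q : ℝ, 0 ≤ ∫ ω, (pinball τ (Y ω - q) - pinball τ (Y ω - qstar)) ∂μ := by
  intro q
  set Y' := hY.1.mk Y with hY'_def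
  have hae : Y =ᵐ[μ] Y' := hY.1.ae_eq_mk
  have hm : Measurable Y' := hY.1.stronglyMeasurable_mk.measurable
  have hY' : Integrable Y' μ := hY.congr hae
  have hmeas_lt : μ {ω | Y ω < qstar} = μ {ω | Y' ω < qstar} := by
    apply measure_congr
    filter_upwards [hae] with ω hω
    show (Y ω < qstar) = (Y' ω < qstar)
    rw [hω]
  have hmeas_le : μ {ω | Y ω ≤ qstar} = μ {ω | Y' ω ≤ qstar} := by
    apply measure_congr
    filter_upwards [hae] with ω hω
    show (Y ω ≤ qstar) = (Y' ω ≤ qstar)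
    rw [hω]
  have hint_eq : ∫ ω, (pinball τ (Y ω - q) - pinball τ (Y ω - qstar)) ∂μ
      = ∫ ω, (pinball τ (Y' ω - q) - pinball τ (Y' ω - qstar)) ∂μ := by
    apply integral_congr_ae
    filter_upwards [hae] with ω hω
    rw [hω]
  rw [hint_eq]
  exact quantile_minimizes_pinball_loss_aux μ Y' hm hY' τ hτ qstar
    (hmeas_lt ▸ h1) (hmeas_le ▸ h2) q
end
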